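/- Let N ≥ 1 be a natural number, c > 0, and H₀ ≤ 0, H₀* ≤ 0 real constants; set θ = H₀* + H₀. Let ζ : (0,∞) → ℝ be differentiable with ζ(t) > 0 for all t > 0, and suppose that −ζ'(t) ≥ c ζ(t)^(1 + 2/N) e^((4H₀/N) t) + θ ζ(t) for all t > 0. Then ζ(t) ≤ (N/(2c))^(N/2) e^((−H₀* − 2H₀) t) t^(−N/2) for all t > 0. -/

import Mathlib

open Real Set Filter Topology

/-!
With `θ = H₀* + H₀`, the function `u = e^{θt} ζ` satisfies the Bernoulli-type inequality
`u' ≤ -c e^{2(H₀ - H₀*)t/N} u^{1 + 2/N}`, so `g = u^{-2/N}` has `g' ≥ (2c/N) e^{2H₀t/N}`.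
On `(0, T)` the right-hand side is at least its value at `T` (as `H₀ ≤ 0`); since `g > 0`,
integrating from `0` gives `g(T) ≥ (2c/N) e^{2H₀T/N} T`, which inverts to the bound.
-/

theorem mul_sub_le_of_nonneg_of_le_deriv {g : ℝ → ℝ} {K a b : ℝ} (hab : a < b)
    (hg : ∀ t ∈ Ioc a b, DifferentiableAt ℝ g t) (hg_nonneg : ∀ t ∈ Ioc a b, 0 ≤ g t)
    (hK : ∀ t ∈ Ioo a b, K ≤ deriv g t) : K * (b - a) ≤ g b := by
  have hmvt := (convex_Ioc a b).mul_sub_le_image_sub_of_le_deriv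
    (fun t ht => (hg t ht).continuousAt.continuousWithinAt)
    (by
      rw [interior_Ioc]
      exact fun t ht => (hg t (Ioo_subset_Ioc_self ht)).differentiableWithinAt)
    (by rwa [interior_Ioc])
  have hlim : Tendsto (fun s => K * (b - s)) (𝓝[>] a) (𝓝 (K * (b - a))) :=
    ((continuous_const.mul (continuous_const.sub continuous_id)).tendsto a).mono_left
      nhdsWithin_le_nhds
  refine le_of_tendsto hlim ?_
  filter_upwards [Ioo_mem_nhdsGT hab] with s hs
  have hs' : s ∈ Ioc a b := Ioo_subset_Ioc_self hs
  linarith [hmvt s hs' b (right_mem_Ioc.2 hab) hs.2.le, hg_nonneg s hs']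

theorem le_deriv_rpow_neg_of_le_neg_mul_rpow {u : ℝ → ℝ} {u' a q t : ℝ} (hq : 0 ≤ q)
    (hu : HasDerivAt u u' t) (hpos : 0 < u t) (h : u' ≤ -(a * u t ^ (1 + q))) :
    q * a ≤ deriv (fun x => u x ^ (-q)) t := by
  rw [(hu.rpow_const (Or.inl hpos.ne')).deriv]
  have hpow : u t ^ (-q - 1) * u t ^ (1 + q) = 1 := by
    rw [← rpow_add hpos, show -q - 1 + (1 + q) = 0 by ring, rpow_zero]
  calc q * a = -q * u t ^ (-q - 1) * -(a * u t ^ (1 + q)) := by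
        linear_combination -(q * a) * hpow
    _ ≤ -q * u t ^ (-q - 1) * u' :=
        mul_le_mul_of_nonpos_left h
          (mul_nonpos_of_nonpos_of_nonneg (neg_nonpos.2 hq) (rpow_nonneg hpos.le _))
    _ = u' * -q * u t ^ (-q - 1) := by ring

theorem exp_mul_add_le_neg_mul_exp_mul_rpow {N c H0 H0s z z' t T : ℝ} (hN : 0 ≤ N)
    (hc : 0 ≤ c) (hH0 : H0 ≤ 0) (hH0s : H0s ≤ 0) (hz : 0 < z) (ht : 0 ≤ t) (htT : t ≤ T)
    (h : c * z ^ (1 + 2 / N) * exp (4 * H0 / N * t) + (H0s + H0) * z ≤ -z') :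
    exp ((H0s + H0) * t) * (z' + (H0s + H0) * z) ≤
      -(c * exp (2 * H0 / N * T) * (exp ((H0s + H0) * t) * z) ^ (1 + 2 / N)) := by
  have hpow : (exp ((H0s + H0) * t) * z) ^ (1 + 2 / N) =
      exp ((H0s + H0) * t * (1 + 2 / N)) * z ^ (1 + 2 / N) := by
    rw [mul_rpow (exp_pos _).le hz.le, ← exp_mul]
  have hexp : exp (2 * H0 / N * T) * exp ((H0s + H0) * t * (1 + 2 / N)) ≤
      exp (4 * H0 / N * t) * exp ((H0s + H0) * t) := by
    rw [← exp_add, ← exp_add, exp_le_exp, ← sub_nonneg]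
    have hsplit : 4 * H0 / N * t + (H0s + H0) * t -
        (2 * H0 / N * T + (H0s + H0) * t * (1 + 2 / N)) =
        2 / N * (-H0 * (T - t) + -H0s * t) := by ring
    rw [hsplit]
    have hH0_term : 0 ≤ -H0 * (T - t) := mul_nonneg (by linarith) (by linarith)
    have hH0s_term : 0 ≤ -H0s * t := mul_nonneg (by linarith) ht
    exact mul_nonneg (by positivity) (add_nonneg hH0_term hH0s_term)
  have hmul := mul_le_mul_of_nonneg_left hexp (mul_nonneg hc (rpow_pos_of_pos hz (1 + 2 / N)).le)
  have hineq := mul_le_mul_of_nonneg_left h (exp_pos ((H0s + H0) * t)).le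
  rw [hpow]
  linarith

theorem exp_neg_mul_le_of_le_rpow_neg {N c H0 H0s T v : ℝ} (hN : 0 < N) (hc : 0 < c)
    (hT : 0 < T) (hv : 0 < v) (h : 2 / N * (c * exp (2 * H0 / N * T)) * T ≤ v ^ (-(2 / N))) :
    exp (-((H0s + H0) * T)) * v ≤
      (N / (2 * c)) ^ (N / 2) * exp ((-H0s - 2 * H0) * T) * T ^ (-N / 2) := by
  have hv_le := (le_rpow_inv_iff_of_neg hv (by positivity) (neg_neg_of_pos (by positivity))).2 h
  rw [← mul_assoc, mul_rpow (by positivity) hT.le, mul_rpow (by positivity) (exp_pos _).le,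
    ← exp_mul, inv_neg, inv_div, rpow_neg (by positivity), ← inv_rpow (by positivity),
    show (2 / N * c)⁻¹ = N / (2 * c) by field_simp] at hv_le
  have hexp : exp (-((H0s + H0) * T)) * exp (2 * H0 / N * T * -(N / 2)) =
      exp ((-H0s - 2 * H0) * T) := by
    rw [← exp_add]
    congr 1
    field_simp
    ring
  calc exp (-((H0s + H0) * T)) * v
      ≤ exp (-((H0s + H0) * T)) * ((N / (2 * c)) ^ (N / 2) * exp (2 * H0 / N * T * -(N / 2)) *
          T ^ (-(N / 2))) := by gcongr
    _ = _ := by rw [← hexp, neg_div]; ring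

/-- The differential-inequality argument of the paper's Lemma: if `ζ > 0` is differentiable
on `(0,∞)` and satisfies `-ζ' ≥ c ζ^(1+2/N) e^(4H₀t/N) + (H₀* + H₀) ζ`, then
`ζ(t) ≤ (N/(2c))^(N/2) e^((-H₀* - 2H₀)t) t^(-N/2)`. -/
theorem differential_inequality_decay (N : ℕ) (hN : 1 ≤ N) (c : ℝ) (hc : 0 < c)
    (H0 H0s : ℝ) (hH0 : H0 ≤ 0) (hH0s : H0s ≤ 0)
    (ζ : ℝ → ℝ)
    (hζdiff : ∀ t : ℝ, 0 < t → DifferentiableAt ℝ ζ t)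
    (hζpos : ∀ t : ℝ, 0 < t → 0 < ζ t)
    (hineq : ∀ t : ℝ, 0 < t →
      c * ζ t ^ (1 + 2 / (N : ℝ)) * Real.exp (4 * H0 / (N : ℝ) * t) + (H0s + H0) * ζ t ≤
        -deriv ζ t) :
    ∀ t : ℝ, 0 < t →
      ζ t ≤ ((N : ℝ) / (2 * c)) ^ ((N : ℝ) / 2) * Real.exp ((-H0s - 2 * H0) * t) *
        t ^ (-(N : ℝ) / 2) := by
  intro T hT
  have hNpos : (0 : ℝ) < N := by exact_mod_cast hN
  set u : ℝ → ℝ := fun x => exp ((H0s + H0) * x) * ζ x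
  have hu_pos : ∀ t, 0 < t → 0 < u t := fun t ht => mul_pos (exp_pos _) (hζpos t ht)
  have hu_deriv : ∀ t, 0 < t →
      HasDerivAt u (exp ((H0s + H0) * t) * (deriv ζ t + (H0s + H0) * ζ t)) t := by
    intro t ht
    refine (((hasDerivAt_id' t).const_mul _).exp.mul (hζdiff t ht).hasDerivAt).congr_deriv ?_
    ring
  have hg : 2 / (N : ℝ) * (c * exp (2 * H0 / N * T)) * T ≤ u T ^ (-(2 / (N : ℝ))) := by
    simpa only [sub_zero] using mul_sub_le_of_nonneg_of_le_deriv hT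
      (fun t ht => ((hu_deriv t ht.1).rpow_const (Or.inl (hu_pos t ht.1).ne')).differentiableAt)
      (fun t ht => (rpow_pos_of_pos (hu_pos t ht.1) _).le)
      (fun t ht => le_deriv_rpow_neg_of_le_neg_mul_rpow (by positivity) (hu_deriv t ht.1)
        (hu_pos t ht.1) (exp_mul_add_le_neg_mul_exp_mul_rpow hNpos.le hc.le hH0 hH0s
          (hζpos t ht.1) ht.1.le ht.2.le (hineq t ht.1)))
  calc ζ T = exp (-((H0s + H0) * T)) * u T := by
        rw [← mul_assoc, ← exp_add, neg_add_cancel, exp_zero, one_mul]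
    _ ≤ _ := exp_neg_mul_le_of_le_rpow_neg hNpos hc hT (hu_pos T hT) hg
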